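/- arXiv:1501.07556 — 7 statements merged into one kernel-verified Lean document; each statement's English description precedes it below -/
import Mathlib

section
/- Let C ⊆ F_q^n be a code valid for the constraint graph G with |C| = q^s (i.e., the encoding map m ↦ (f_1(m), …, f_n(m)) is injective). Then for every nonempty subset M' ⊆ M, the minimum distance satisfies d(C) ≤ n_{M'} − |M'| + 1. -/
/-- The neighborhood `N(M')` of a set `M'` of message vertices in the constraint
bipartite graph with adjacency relation `E`. -/
def nbr {s n : ℕ} (E : Fin s → Fin n → Prop) [∀ i j, Decidable (E i j)]
    (M' : Finset (Fin s)) : Finset (Fin n) :=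
  Finset.univ.filter fun j => ∃ i ∈ M', E i j

/-- Minimum Hamming distance of a code `C ⊆ F^n` (minimum over pairs of distinct
codewords; `sInf ∅ = 0` if there are fewer than two codewords). -/
noncomputable def minDist {n : ℕ} {F : Type*} [DecidableEq F] (C : Set (Fin n → F)) : ℕ :=
  sInf {d | ∃ x ∈ C, ∃ y ∈ C, x ≠ y ∧ hammingDist x y = d}

/-- If `C ⊆ F_q^n` is a code valid for the constraint graph `G`
with `|C| = q^s` (the encoding map is injective), then for every nonempty
`M' ⊆ M` we have `d(C) ≤ n_{M'} − |M'| + 1`. -/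
theorem minDist_le_nbr_card_sub_card_add_one
    {s n : ℕ} {F : Type*} [Field F] [Fintype F] [DecidableEq F]
    (hsn : s ≤ n)
    (E : Fin s → Fin n → Prop) [∀ i j, Decidable (E i j)]
    (f : Fin n → (Fin s → F) → F)
    (hloc : ∀ j : Fin n, ∀ m m' : Fin s → F,
      (∀ i : Fin s, E i j → m i = m' i) → f j m = f j m')
    (C : Set (Fin n → F))
    (hC : C = Set.range fun m : Fin s → F => fun j : Fin n => f j m)
    (henc : Function.Injective fun m : Fin s → F => fun j : Fin n => f j m)
    (M' : Finset (Fin s)) (hM' : M'.Nonempty) :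
    (minDist C : ℤ) ≤ ((nbr E M').card : ℤ) - (M'.card : ℤ) + 1 := by
  classical
  set N := nbr E M' with hN
  set k := M'.card with hk
  set ext : (↥M' → F) → (Fin s → F) :=
    fun a i => if h : i ∈ M' then a ⟨i, h⟩ else 0 with hext
  have hext_inj : Function.Injective ext := by
    intro a b hab
    funext i
    have := congrFun hab i.1
    simpa [ext, i.2] using this
  have hagree : ∀ a b : (↥M' → F), ∀ j : Fin n, j ∉ N →
      f j (ext a) = f j (ext b) := by
    intro a b j hj
    apply hloc
    intro i hij
    have hiM : i ∉ M' := by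
      intro h
      apply hj
      rw [hN, nbr, Finset.mem_filter]
      exact ⟨Finset.mem_univ j, i, h, hij⟩
    show (if h : i ∈ M' then a ⟨i, h⟩ else 0) = (if h : i ∈ M' then b ⟨i, h⟩ else 0)
    rw [dif_neg hiM, dif_neg hiM]
  have hq : 1 < Fintype.card F := Fintype.one_lt_card
  have hkN : k ≤ N.card := by
    by_contra hlt
    push_neg at hlt
    have hcard : Fintype.card (↥N → F) < Fintype.card (↥M' → F) := by
      simp only [Fintype.card_fun, Fintype.card_coe]
      exact Nat.pow_lt_pow_right hq hlt
    obtain ⟨a, b, hne, heq⟩ := Fintype.exists_ne_map_eq_of_card_lt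
      (fun a : ↥M' → F => fun j : ↥N => f j.1 (ext a)) hcard
    apply hne
    apply hext_inj
    apply henc
    funext j
    by_cases hj : j ∈ N
    · exact congrFun heq ⟨j, hj⟩
    · exact hagree a b j hj
  have hk1N : k - 1 ≤ N.card := le_trans (Nat.sub_le k 1) hkN
  obtain ⟨S, hSN, hScard⟩ := Finset.exists_subset_card_eq hk1N
  have hk1 : 1 ≤ k := hM'.card_pos
  have hcard2 : Fintype.card (↥S → F) < Fintype.card (↥M' → F) := by
    simp only [Fintype.card_fun, Fintype.card_coe, hScard]
    exact Nat.pow_lt_pow_right hq (Nat.sub_lt hk1 one_pos)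
  obtain ⟨a, b, hne, heq⟩ := Fintype.exists_ne_map_eq_of_card_lt
    (fun a : ↥M' → F => fun j : ↥S => f j.1 (ext a)) hcard2
  set x := fun j : Fin n => f j (ext a) with hx
  set y := fun j : Fin n => f j (ext b) with hy
  have hxy : x ≠ y := fun h => hne (hext_inj (henc h))
  have hxC : x ∈ C := by rw [hC]; exact ⟨ext a, rfl⟩
  have hyC : y ∈ C := by rw [hC]; exact ⟨ext b, rfl⟩
  have hdist : hammingDist x y ≤ (N \ S).card := by
    rw [hammingDist]
    apply Finset.card_le_card
    intro j hj
    simp only [Finset.mem_filter, Finset.mem_univ, true_and] at hj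
    simp only [Finset.mem_sdiff]
    constructor
    · by_contra h; exact hj (hagree a b j h)
    · intro hjS; exact hj (congrFun heq ⟨j, hjS⟩)
  have hmin : minDist C ≤ (N \ S).card :=
    le_trans (Nat.sInf_le ⟨x, hxC, y, hyC, hxy, rfl⟩) hdist
  have hcards : ((N \ S).card : ℤ) = (N.card : ℤ) - (k : ℤ) + 1 := by
    rw [Finset.card_sdiff_of_subset hSN, hScard]
    push_cast [hk1N, hk1]
    ring
  calc (minDist C : ℤ) ≤ ((N \ S).card : ℤ) := by exact_mod_cast hmin
    _ = _ := hcards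
end

section
/- Let C ⊆ F_q^n be a code valid for the constraint graph G with |C| = q^s. Then d(C) ≤ min over nonempty M' ⊆ M of (n_{M'} − |M'|) + 1. -/
/-!
Fix a nonempty `M'` attaining the minimum and put `N = N(M')`, `k = |M'|`. The `q^k` messages
supported on `M'` have codewords that agree outside `N`, by locality of the encoder. By
pigeonhole, two of them also agree on any `k - 1` positions `S ⊆ N`, so their (distinct, by
injectivity) codewords differ only on `N \ S`, which has `n_{M'} - k + 1` elements. The same
pigeonhole with `S = N` shows that injectivity forces `k ≤ n_{M'}`, so this count is not truncated.
-/

open Finset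

theorem minDist_le_card_of_eq_of_notMem {n : ℕ} {F : Type*} [DecidableEq F]
    {C : Set (Fin n → F)} {x y : Fin n → F} (hx : x ∈ C) (hy : y ∈ C) (hxy : x ≠ y)
    {D : Finset (Fin n)} (hD : ∀ j ∉ D, x j = y j) : minDist C ≤ #D :=
  calc minDist C ≤ hammingDist x y := Nat.sInf_le ⟨x, hx, y, hy, hxy, rfl⟩
    _ ≤ #D := card_le_card fun j hj => by
      by_contra hjD
      exact (mem_filter.mp hj).2 (hD j hjD)

theorem exists_ne_forall_mem_eq_of_card_pow_lt {ι α F : Type*} [Fintype α] [Fintype F]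
    (φ : α → ι → F) {S : Finset ι} (hS : Fintype.card F ^ #S < Fintype.card α) :
    ∃ a b, a ≠ b ∧ ∀ j ∈ S, φ a j = φ b j := by
  classical
  obtain ⟨a, b, hab, heq⟩ := Fintype.exists_ne_map_eq_of_card_lt
    (fun a (j : S) => φ a j) (by simpa [Fintype.card_fun] using hS)
  exact ⟨a, b, hab, fun j hj => congrFun heq ⟨j, hj⟩⟩

def IsLocalEncoder {s n : ℕ} {F : Type*} (E : Fin s → Fin n → Prop)
    (f : Fin n → (Fin s → F) → F) : Prop :=
  ∀ j : Fin n, ∀ m m' : Fin s → F, (∀ i : Fin s, E i j → m i = m' i) → f j m = f j m'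

section ConstraintGraph

variable {s n : ℕ} {F : Type*} (E : Fin s → Fin n → Prop) [∀ i j, Decidable (E i j)]
  {f : Fin n → (Fin s → F) → F}

theorem apply_eq_of_notMem_nbr (hloc : IsLocalEncoder E f)
    {M' : Finset (Fin s)} {m m' : Fin s → F} (hm : ∀ i ∉ M', m i = m' i)
    {j : Fin n} (hj : j ∉ nbr E M') : f j m = f j m' :=
  hloc j m m' fun i hij => hm i fun hi => hj (mem_filter.mpr ⟨mem_univ j, i, hi, hij⟩)

theorem exists_ne_apply_eq_of_notMem_nbr_sdiff [Fintype F] [Zero F] [Nontrivial F]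
    (hloc : IsLocalEncoder E f)
    {M' : Finset (Fin s)} {S : Finset (Fin n)} (hS : #S < #M') :
    ∃ m m' : Fin s → F, m ≠ m' ∧ ∀ j ∉ nbr E M' \ S, f j m = f j m' := by
  let supportedOn (g : M' → F) : Fin s → F := Function.extend Subtype.val g (0 : Fin s → F)
  have hcard : Fintype.card F ^ #S < Fintype.card (M' → F) := by
    rw [Fintype.card_fun, Fintype.card_coe]
    exact Nat.pow_lt_pow_right Fintype.one_lt_card hS
  obtain ⟨g, g', hgg', hS_eq⟩ :=
    exists_ne_forall_mem_eq_of_card_pow_lt (fun g j => f j (supportedOn g)) hcard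
  refine ⟨supportedOn g, supportedOn g',
    (Function.extend_injective Subtype.val_injective (0 : Fin s → F)).ne hgg', fun j hj => ?_⟩
  by_cases hjS : j ∈ S
  · exact hS_eq j hjS
  · refine apply_eq_of_notMem_nbr E hloc (M' := M') (fun i hi => ?_)
      fun hjN => hj (mem_sdiff.mpr ⟨hjN, hjS⟩)
    have hi' : ¬∃ a : M', a.val = i := fun ⟨a, ha⟩ => hi (ha ▸ a.2)
    simp only [supportedOn, Function.extend_apply' _ _ _ hi']

theorem card_le_card_nbr_of_injective [Fintype F] [Zero F] [Nontrivial F]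
    (hloc : IsLocalEncoder E f)
    (henc : Function.Injective fun m : Fin s → F => fun j : Fin n => f j m)
    (M' : Finset (Fin s)) : #M' ≤ #(nbr E M') := by
  by_contra! hlt
  obtain ⟨m, m', hmm', heq⟩ := exists_ne_apply_eq_of_notMem_nbr_sdiff E hloc hlt
  exact hmm' (henc (funext fun j => heq j (by simp)))

end ConstraintGraph

theorem minDist_le_min_nbr_card_sub_card_add_one_general
    {s n : ℕ} {F : Type*} [Field F] [Fintype F] [DecidableEq F]
    (E : Fin s → Fin n → Prop) [∀ i j, Decidable (E i j)]
    (f : Fin n → (Fin s → F) → F)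
    (hloc : ∀ j : Fin n, ∀ m m' : Fin s → F,
      (∀ i : Fin s, E i j → m i = m' i) → f j m = f j m')
    (C : Set (Fin n → F))
    (hC : C = Set.range fun m : Fin s → F => fun j : Fin n => f j m)
    (henc : Function.Injective fun m : Fin s → F => fun j : Fin n => f j m)
    (dminPred : ℤ)
    (hmin : IsLeast {x : ℤ | ∃ M' : Finset (Fin s), M'.Nonempty ∧
      x = ((nbr E M').card : ℤ) - (M'.card : ℤ)} dminPred) :
    (minDist C : ℤ) ≤ dminPred + 1 := by
  obtain ⟨⟨M', hM'ne, rfl⟩, -⟩ := hmin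
  have hk_le := card_le_card_nbr_of_injective E hloc henc M'
  obtain ⟨S, hSN, hS⟩ := Finset.exists_subset_card_eq (hk_le.trans' (Nat.sub_le #M' 1))
  have hk_pos := hM'ne.card_pos
  obtain ⟨m, m', hmm', heq⟩ :=
    exists_ne_apply_eq_of_notMem_nbr_sdiff E hloc (M' := M') (S := S) (by omega)
  have hdist := minDist_le_card_of_eq_of_notMem (C := C) (hC ▸ ⟨m, rfl⟩) (hC ▸ ⟨m', rfl⟩)
    (henc.ne hmm') heq
  rw [card_sdiff_of_subset hSN, hS] at hdist
  omega

/-- If `C ⊆ F_q^n` is a code valid for the constraint graph `G`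
with `|C| = q^s`, then `d(C) ≤ min_{∅ ≠ M' ⊆ M} (n_{M'} − |M'|) + 1`.
The minimum is expressed via an `IsLeast` hypothesis. -/
theorem minDist_le_min_nbr_card_sub_card_add_one
    {s n : ℕ} {F : Type*} [Field F] [Fintype F] [DecidableEq F]
    (hsn : s ≤ n)
    (E : Fin s → Fin n → Prop) [∀ i j, Decidable (E i j)]
    (f : Fin n → (Fin s → F) → F)
    (hloc : ∀ j : Fin n, ∀ m m' : Fin s → F,
      (∀ i : Fin s, E i j → m i = m' i) → f j m = f j m')
    (C : Set (Fin n → F))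
    (hC : C = Set.range fun m : Fin s → F => fun j : Fin n => f j m)
    (henc : Function.Injective fun m : Fin s → F => fun j : Fin n => f j m)
    (dminPred : ℤ)
    (hmin : IsLeast {x : ℤ | ∃ M' : Finset (Fin s), M'.Nonempty ∧
      x = ((nbr E M').card : ℤ) - (M'.card : ℤ)} dminPred) :
    (minDist C : ℤ) ≤ dminPred + 1 :=
  minDist_le_min_nbr_card_sub_card_add_one_general E f hloc C hC henc dminPred hmin
end

section
/- Let G = (M, V, E) be a constraint graph. For every M-covering matching Ẽ of G, k_min ≤ k_Ẽ. Consequently, if G admits at least one M-covering matching, then k_min ≤ k_sys ≤ n and d_sys ≤ d_min. -/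
/-- An `M`-covering matching of the constraint graph: an injection `jm` assigning
to each message vertex a distinct adjacent code vertex. -/
def IsMatching {s n : ℕ} (E : Fin s → Fin n → Prop) (jm : Fin s → Fin n) : Prop :=
  Function.Injective jm ∧ ∀ i : Fin s, E i (jm i)

/-- The entry `(i, l)` of the matched adjacency matrix `A_Ẽ` is nonzero iff either
`l = jm i`, or `l` is unmatched and `(m_i, c_l) ∈ E`. -/
def MatchedAdj {s n : ℕ} (E : Fin s → Fin n → Prop) (jm : Fin s → Fin n)
    (i : Fin s) (l : Fin n) : Prop :=
  l = jm i ∨ (l ∉ Finset.image jm Finset.univ ∧ E i l)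

instance {s n : ℕ} (E : Fin s → Fin n → Prop) [∀ i j, Decidable (E i j)]
    (jm : Fin s → Fin n) (i : Fin s) (l : Fin n) : Decidable (MatchedAdj E jm i l) := by
  unfold MatchedAdj; infer_instance

/-- `k_Ẽ = z_Ẽ + 1`, where `z_Ẽ` is the maximum number of zeros in any row of the
matched adjacency matrix `A_Ẽ`. -/
def kMatch {s n : ℕ} (E : Fin s → Fin n → Prop) [∀ i j, Decidable (E i j)]
    (jm : Fin s → Fin n) : ℕ :=
  (Finset.univ.sup fun i : Fin s =>
    (Finset.univ.filter fun l : Fin n => ¬ MatchedAdj E jm i l).card) + 1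

/-- For every `M`-covering matching `Ẽ` of `G`, `k_min ≤ k_Ẽ`
(here `k_min = n − d_min + 1 = n − dminPred` where `dminPred` is the least value
of `n_{M'} − |M'|` over nonempty `M' ⊆ M`).  Consequently, if `G` admits an
`M`-covering matching, then `k_min ≤ k_sys ≤ n` and `d_sys = n − k_sys + 1 ≤
d_min = dminPred + 1`. -/
theorem kmin_le_kMatch_and_ksys_le_n_and_dsys_le_dmin
    {s n : ℕ} (hsn : s ≤ n)
    (E : Fin s → Fin n → Prop) [∀ i j, Decidable (E i j)]
    (dminPred : ℤ)
    (hmin : IsLeast {x : ℤ | ∃ M' : Finset (Fin s), M'.Nonempty ∧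
      x = ((nbr E M').card : ℤ) - (M'.card : ℤ)} dminPred) :
    (∀ jm : Fin s → Fin n, IsMatching E jm →
      (n : ℤ) - dminPred ≤ (kMatch E jm : ℤ)) ∧
    (∀ ksys : ℕ,
      IsLeast {k : ℕ | ∃ jm : Fin s → Fin n, IsMatching E jm ∧ k = kMatch E jm} ksys →
      (n : ℤ) - dminPred ≤ (ksys : ℤ) ∧ (ksys : ℤ) ≤ (n : ℤ) ∧
        (n : ℤ) - (ksys : ℤ) + 1 ≤ dminPred + 1) := by
  obtain ⟨⟨M', hne, hval⟩, _⟩ := hmin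
  obtain ⟨i0, hi0⟩ := hne
  have key : ∀ jm : Fin s → Fin n, IsMatching E jm →
      (n : ℤ) - dminPred ≤ (kMatch E jm : ℤ) := by
    intro jm hjm
    obtain ⟨hinj, hadj⟩ := hjm
    set NZ := Finset.univ.filter fun l : Fin n => MatchedAdj E jm i0 l with hNZ
    set Z := Finset.univ.filter fun l : Fin n => ¬ MatchedAdj E jm i0 l with hZ
    have hsubimg : Finset.image jm M' ⊆ nbr E M' := by
      intro l hl
      simp only [Finset.mem_image] at hl
      obtain ⟨i, hiM, rfl⟩ := hl
      simp only [nbr, Finset.mem_filter, Finset.mem_univ, true_and]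
      exact ⟨i, hiM, hadj i⟩
    have hcardimg : (Finset.image jm M').card = M'.card :=
      Finset.card_image_of_injective _ hinj
    have hcards : M'.card ≤ (nbr E M').card := by
      calc M'.card = (Finset.image jm M').card := hcardimg.symm
        _ ≤ (nbr E M').card := Finset.card_le_card hsubimg
    have hsub : NZ ⊆ insert (jm i0) (nbr E M' \ Finset.image jm M') := by
      intro l hl
      simp only [hNZ, Finset.mem_filter, Finset.mem_univ, true_and] at hl
      rcases hl with h | ⟨hnm, hE⟩
      · exact Finset.mem_insert.mpr (Or.inl h)
      · refine Finset.mem_insert.mpr (Or.inr (Finset.mem_sdiff.mpr ⟨?_, ?_⟩))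
        · simp only [nbr, Finset.mem_filter, Finset.mem_univ, true_and]
          exact ⟨i0, hi0, hE⟩
        · intro hc
          exact hnm (Finset.image_subset_image (Finset.subset_univ M') hc)
    have hNZcard : NZ.card ≤ ((nbr E M').card - M'.card) + 1 := by
      calc NZ.card ≤ (insert (jm i0) (nbr E M' \ Finset.image jm M')).card :=
            Finset.card_le_card hsub
        _ ≤ (nbr E M' \ Finset.image jm M').card + 1 := Finset.card_insert_le _ _
        _ = (nbr E M').card - M'.card + 1 := by
            rw [Finset.card_sdiff_of_subset hsubimg, hcardimg]
    have hsum : NZ.card + Z.card = n := by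
      rw [hNZ, hZ, Finset.card_filter_add_card_filter_not, Finset.card_univ,
        Fintype.card_fin]
    have hZsup : Z.card ≤ Finset.univ.sup fun i : Fin s =>
        (Finset.univ.filter fun l : Fin n => ¬ MatchedAdj E jm i l).card :=
      Finset.le_sup (f := fun i : Fin s =>
        (Finset.univ.filter fun l : Fin n => ¬ MatchedAdj E jm i l).card) (Finset.mem_univ i0)
    have hk : Z.card + 1 ≤ kMatch E jm := by
      unfold kMatch; omega
    zify [hcards] at hNZcard
    have hsum' : (NZ.card : ℤ) + Z.card = n := by exact_mod_cast hsum
    have hk' : (Z.card : ℤ) + 1 ≤ kMatch E jm := by exact_mod_cast hk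
    rw [hval]
    linarith
  have hn1 : 1 ≤ n := le_trans i0.pos hsn
  have hle_n : ∀ jm : Fin s → Fin n, IsMatching E jm → kMatch E jm ≤ n := by
    intro jm hjm
    have hrow : ∀ i : Fin s,
        (Finset.univ.filter fun l : Fin n => ¬ MatchedAdj E jm i l).card ≤ n - 1 := by
      intro i
      have hsub : (Finset.univ.filter fun l : Fin n => ¬ MatchedAdj E jm i l) ⊆
          Finset.univ.erase (jm i) := by
        intro l hl
        simp only [Finset.mem_filter, Finset.mem_univ, true_and] at hl
        exact Finset.mem_erase.mpr ⟨fun h => hl (Or.inl h), Finset.mem_univ l⟩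
      calc (Finset.univ.filter fun l : Fin n => ¬ MatchedAdj E jm i l).card
          ≤ (Finset.univ.erase (jm i)).card := Finset.card_le_card hsub
        _ = n - 1 := by
            rw [Finset.card_erase_of_mem (Finset.mem_univ _), Finset.card_univ,
              Fintype.card_fin]
    have hsup : (Finset.univ.sup fun i : Fin s =>
        (Finset.univ.filter fun l : Fin n => ¬ MatchedAdj E jm i l).card) ≤ n - 1 :=
      Finset.sup_le fun i _ => hrow i
    unfold kMatch
    omega
  refine ⟨key, fun ksys hks => ?_⟩
  obtain ⟨⟨jm, hjm, hkeq⟩, _⟩ := hks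
  have h1 := key jm hjm
  have h2 := hle_n jm hjm
  have : (ksys : ℤ) = kMatch E jm := by exact_mod_cast hkeq
  refine ⟨by omega, by omega, by omega⟩
end

section
/- Let G = (M, V, E) be a constraint graph and let C be the linear code associated with a valid generator matrix for G in systematic form, where the systematic positions are given by the M-covering matching Ẽ (i.e., the identity columns sit at the matched coordinates j(1), …, j(s)). If C has at least two elements, then d(C) ≤ n − k_Ẽ + 1 ≤ d_sys. -/
/-- Let `C` be the linear code associated with a valid generator
matrix for `G` in systematic form, where the systematic positions are given by the
`M`-covering matching `Ẽ` (with injection `jm`).  If `C` has at least two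
elements, then `d(C) ≤ n − k_Ẽ + 1 ≤ d_sys = n − k_sys + 1`. -/
theorem minDist_systematic_le_dsys
    {s n : ℕ} {F : Type*} [Field F] [DecidableEq F]
    (hsn : s ≤ n)
    (E : Fin s → Fin n → Prop) [∀ i j, Decidable (E i j)]
    (G : Matrix (Fin s) (Fin n) F)
    (hvalid : ∀ i j, ¬ E i j → G i j = 0)
    (jm : Fin s → Fin n) (hjm : IsMatching E jm)
    (hsys : ∀ i i' : Fin s, G i' (jm i) = if i' = i then 1 else 0)
    (C : Set (Fin n → F))
    (hC : C = {c : Fin n → F | ∃ m : Fin s → F, c = Matrix.vecMul m G})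
    (hC2 : ∃ x ∈ C, ∃ y ∈ C, x ≠ y)
    (ksys : ℕ)
    (hksys : IsLeast {k : ℕ | ∃ jm' : Fin s → Fin n,
      IsMatching E jm' ∧ k = kMatch E jm'} ksys) :
    (minDist C : ℤ) ≤ (n : ℤ) - (kMatch E jm : ℤ) + 1 ∧
    (n : ℤ) - (kMatch E jm : ℤ) + 1 ≤ (n : ℤ) - (ksys : ℤ) + 1 := by
  have hle : ksys ≤ kMatch E jm := hksys.2 ⟨jm, hjm, rfl⟩
  have hnon : Nonempty (Fin s) := by
    by_contra h
    have : IsEmpty (Fin s) := not_nonempty_iff.mp h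
    obtain ⟨x, hx, y, hy, hxy⟩ := hC2
    rw [hC] at hx hy
    obtain ⟨mx, rfl⟩ := hx
    obtain ⟨my, rfl⟩ := hy
    apply hxy
    funext l
    simp [Matrix.vecMul, dotProduct]
  obtain ⟨i, -, hi⟩ := Finset.exists_mem_eq_sup (Finset.univ : Finset (Fin s))
    Finset.univ_nonempty
    (fun i : Fin s => (Finset.univ.filter fun l : Fin n => ¬ MatchedAdj E jm i l).card)
  set Z := (Finset.univ.filter fun l : Fin n => ¬ MatchedAdj E jm i l).card with hZ
  -- the codeword: row i of G
  set c : Fin n → F := fun l => G i l with hc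
  have hcC : c ∈ C := by
    rw [hC]
    refine ⟨fun i' => if i' = i then 1 else 0, ?_⟩
    funext l
    simp [Matrix.vecMul, dotProduct, hc, Finset.sum_ite_eq']
  have h0C : (0 : Fin n → F) ∈ C := by
    rw [hC]
    exact ⟨0, by simp [Matrix.vecMul, dotProduct]⟩
  have hcne : c ≠ 0 := by
    intro h
    have h1 : c (jm i) = 1 := by simp [hc, hsys i i]
    rw [h] at h1
    simp at h1
  -- support of c is contained in MatchedAdj positions
  have hsub : (Finset.univ.filter fun l => c l ≠ (0 : Fin n → F) l) ⊆
      Finset.univ.filter fun l => MatchedAdj E jm i l := by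
    intro l hl
    simp only [Finset.mem_filter, Finset.mem_univ, true_and] at hl ⊢
    by_cases hm : l ∈ Finset.image jm Finset.univ
    · obtain ⟨i', -, rfl⟩ := Finset.mem_image.mp hm
      have := hsys i' i
      by_cases hii : i = i'
      · exact Or.inl (by rw [hii])
      · exfalso; apply hl; simpa [hc, hii] using this
    · refine Or.inr ⟨hm, ?_⟩
      by_contra hE
      exact hl (hvalid i l hE)
  have hcard : (Finset.univ.filter fun l => MatchedAdj E jm i l).card + Z = n := by
    rw [hZ]
    simpa using Finset.card_filter_add_card_filter_not
      (s := (Finset.univ : Finset (Fin n))) (p := fun l => MatchedAdj E jm i l)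
  have hdist : hammingDist c 0 + Z ≤ n := by
    have := Finset.card_le_card hsub
    have hd : hammingDist c 0 = (Finset.univ.filter fun l => c l ≠ (0 : Fin n → F) l).card := by
      rfl
    omega
  have hmin : minDist C ≤ hammingDist c 0 :=
    Nat.sInf_le ⟨c, hcC, 0, h0C, hcne, rfl⟩
  have hk : kMatch E jm = Z + 1 := by rw [kMatch, ← hi]
  constructor
  · rw [hk]; push_cast; omega
  · omega
end

section
/- Let G = (M, V, E) be a constraint graph admitting an M-covering matching, and suppose q ≥ n. Then there exists a valid generator matrix for G in systematic form whose associated linear code has dimension s and minimum distance exactly d_sys. In particular, d_sys is the largest minimum distance attainable by a systematic linear code valid for G. -/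
/-- row of a matrix as a codeword -/
lemma vecMul_single_row {s n : ℕ} {F : Type*} [Field F]
    (G : Matrix (Fin s) (Fin n) F) (i0 : Fin s) (l : Fin n) :
    Matrix.vecMul (fun i => if i = i0 then (1:F) else 0) G l = G i0 l := by
  show ∑ i, _ * G i l = _
  simp [ite_mul]

/-- Let `G = (M, V, E)` be a constraint graph admitting an
`M`-covering matching, with `q ≥ n`.  Then there exists a valid generator matrix
for `G` in systematic form whose associated linear code has dimension `s` (the
encoding map is injective) and minimum distance exactly `d_sys = n − k_sys + 1`.
In particular, `d_sys` is the largest minimum distance attainable by a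
systematic linear code valid for `G`. -/
theorem exists_systematic_valid_generator_with_minDist_eq_dsys
    {s n : ℕ} {F : Type*} [Field F] [Fintype F] [DecidableEq F]
    (hs : 0 < s) (hsn : s ≤ n) (hq : n ≤ Fintype.card F)
    (E : Fin s → Fin n → Prop) [∀ i j, Decidable (E i j)]
    (jm0 : Fin s → Fin n) (hjm0 : IsMatching E jm0)
    (ksys : ℕ)
    (hksys : IsLeast {k : ℕ | ∃ jm : Fin s → Fin n,
      IsMatching E jm ∧ k = kMatch E jm} ksys) :
    (∃ G : Matrix (Fin s) (Fin n) F,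
      (∀ i j, ¬ E i j → G i j = 0) ∧
      (∃ jm : Fin s → Fin n, Function.Injective jm ∧
        ∀ i i' : Fin s, G i' (jm i) = if i' = i then 1 else 0) ∧
      Function.Injective (fun m : Fin s → F => Matrix.vecMul m G) ∧
      (minDist {c : Fin n → F | ∃ m : Fin s → F, c = Matrix.vecMul m G} : ℤ)
        = (n : ℤ) - (ksys : ℤ) + 1) ∧
    (∀ G' : Matrix (Fin s) (Fin n) F,
      (∀ i j, ¬ E i j → G' i j = 0) →
      (∃ jm : Fin s → Fin n, Function.Injective jm ∧
        ∀ i i' : Fin s, G' i' (jm i) = if i' = i then 1 else 0) →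
      (∃ x ∈ {c : Fin n → F | ∃ m : Fin s → F, c = Matrix.vecMul m G'},
        ∃ y ∈ {c : Fin n → F | ∃ m : Fin s → F, c = Matrix.vecMul m G'}, x ≠ y) →
      (minDist {c : Fin n → F | ∃ m : Fin s → F, c = Matrix.vecMul m G'} : ℤ)
        ≤ (n : ℤ) - (ksys : ℤ) + 1) := by
  obtain ⟨hmem, hlb⟩ := hksys
  obtain ⟨jm, ⟨hjI, hjE⟩, hkeq⟩ := hmem
  obtain ⟨αe⟩ : Nonempty (Fin n ↪ F) :=
    Function.Embedding.nonempty_of_card_le (by simpa using hq)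
  set α : Fin n → F := ⇑αe with hαdef
  have hα : Function.Injective α := αe.injective
  constructor
  · -- existence of the good generator matrix
    set B : Fin s → Finset (Fin n) :=
      fun i => Finset.univ.filter fun l : Fin n => ¬ MatchedAdj E jm i l with hBdef
    set z : ℕ := Finset.univ.sup fun i => (B i).card with hzdef
    have hkz : ksys = z + 1 := hkeq
    -- basic membership facts about B
    have hBmem : ∀ i l, l ∈ B i ↔ ¬ MatchedAdj E jm i l := by
      intro i l; rw [hBdef]; simp
    have hjmB : ∀ i, jm i ∉ B i := by
      intro i h
      exact (hBmem i (jm i)).mp h (Or.inl rfl)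
    have hjmB' : ∀ i i' : Fin s, i' ≠ i → jm i ∈ B i' := by
      intro i i' hne
      rw [hBmem]
      rintro (h | ⟨h, -⟩)
      · exact hne (hjI h).symm
      · exact h (Finset.mem_image.mpr ⟨i, Finset.mem_univ i, rfl⟩)
    have hnE : ∀ i l, ¬ E i l → l ∈ B i := by
      intro i l h
      rw [hBmem]
      rintro (rfl | ⟨-, he⟩)
      · exact h (hjE i)
      · exact h he
    -- the polynomials
    set p : Fin s → Polynomial F :=
      fun i => ∏ l ∈ B i, (Polynomial.X - Polynomial.C (α l)) with hpdef
    have hpeval : ∀ i l, Polynomial.eval (α l) (p i) = 0 ↔ l ∈ B i := by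
      intro i l
      rw [hpdef]
      simp only [Polynomial.eval_prod, Polynomial.eval_sub, Polynomial.eval_X,
        Polynomial.eval_C, Finset.prod_eq_zero_iff, sub_eq_zero]
      constructor
      · rintro ⟨l', hl', he⟩; rwa [hα he]
      · exact fun h => ⟨l, h, rfl⟩
    have hd : ∀ i, Polynomial.eval (α (jm i)) (p i) ≠ 0 :=
      fun i h => hjmB i ((hpeval i (jm i)).mp h)
    have hpdeg : ∀ i, (p i).natDegree ≤ z := by
      intro i
      rw [hpdef]
      rw [Polynomial.natDegree_prod_of_monic _ _ (fun l _ => Polynomial.monic_X_sub_C (α l))]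
      simp only [Polynomial.natDegree_X_sub_C]
      rw [Finset.sum_const, smul_eq_mul, mul_one, hzdef]
      exact Finset.le_sup (f := fun i => (B i).card) (Finset.mem_univ i)
    have hpdeg' : ∀ i, (p i).natDegree = (B i).card := by
      intro i
      rw [hpdef]
      rw [Polynomial.natDegree_prod_of_monic _ _ (fun l _ => Polynomial.monic_X_sub_C (α l))]
      simp [Polynomial.natDegree_X_sub_C]
    -- the generator matrix
    set G : Matrix (Fin s) (Fin n) F :=
      Matrix.of fun i l => (Polynomial.eval (α (jm i)) (p i))⁻¹ * Polynomial.eval (α l) (p i)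
      with hGdef
    have hGapp : ∀ i l,
        G i l = (Polynomial.eval (α (jm i)) (p i))⁻¹ * Polynomial.eval (α l) (p i) :=
      fun i l => rfl
    have hGvalid : ∀ i l, ¬ E i l → G i l = 0 := by
      intro i l h
      rw [hGapp, (hpeval i l).mpr (hnE i l h), mul_zero]
    have hGsys : ∀ i i' : Fin s, G i' (jm i) = if i' = i then 1 else 0 := by
      intro i i'
      by_cases h : i' = i
      · subst h
        simp [hGapp, inv_mul_cancel₀ (hd i')]
      · simp [h, hGapp, (hpeval i' (jm i)).mpr (hjmB' i i' h)]
    have hvec : ∀ (m : Fin s → F) (l : Fin n),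
        Matrix.vecMul m G l = ∑ i, m i * G i l := fun _ _ => rfl
    have hcw : ∀ (m : Fin s → F) (i : Fin s), Matrix.vecMul m G (jm i) = m i := by
      intro m i
      rw [hvec]
      simp [hGsys, mul_ite]
    have hinj : Function.Injective (fun m : Fin s → F => Matrix.vecMul m G) := by
      intro m m' h
      funext i
      have := congrFun h (jm i)
      simpa [hcw] using this
    -- the codeword polynomial
    set P : (Fin s → F) → Polynomial F :=
      fun m => ∑ i, Polynomial.C (m i * (Polynomial.eval (α (jm i)) (p i))⁻¹) * p i with hPdef
    have hPeval : ∀ m l, Polynomial.eval (α l) (P m) = Matrix.vecMul m G l := by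
      intro m l
      rw [hvec, hPdef]
      simp only [Polynomial.eval_finset_sum, Polynomial.eval_mul, Polynomial.eval_C]
      exact Finset.sum_congr rfl fun i _ => by rw [hGapp]; ring
    have hPdeg : ∀ m, (P m).natDegree ≤ z := by
      intro m
      rw [hPdef]
      refine Polynomial.natDegree_sum_le_of_forall_le _ _ (fun i _ => ?_)
      exact le_trans (Polynomial.natDegree_C_mul_le _ _) (hpdeg i)
    -- zero count bound for nonzero codewords
    have hzerocard : ∀ m : Fin s → F, m ≠ 0 →
        (Finset.univ.filter fun l => Matrix.vecMul m G l = 0).card ≤ z := by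
      intro m hm
      have hPne : P m ≠ 0 := by
        obtain ⟨i, hi⟩ := Function.ne_iff.mp hm
        intro h0
        apply hi
        have h1 := hPeval m (jm i)
        rw [h0, hcw] at h1
        simpa using h1.symm
      set t := Finset.univ.filter fun l => Matrix.vecMul m G l = 0 with ht
      have hsub : t.image α ⊆ (P m).roots.toFinset := by
        intro a ha
        obtain ⟨l, hl, rfl⟩ := Finset.mem_image.mp ha
        rw [Multiset.mem_toFinset, Polynomial.mem_roots hPne]
        have h2 := (Finset.mem_filter.mp hl).2
        rw [Polynomial.IsRoot, hPeval]
        exact h2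
      calc t.card = (t.image α).card := (Finset.card_image_of_injective t hα).symm
        _ ≤ (P m).roots.toFinset.card := Finset.card_le_card hsub
        _ ≤ Multiset.card (P m).roots := (P m).roots.toFinset_card_le
        _ ≤ (P m).natDegree := (P m).card_roots'
        _ ≤ z := hPdeg m
    -- distance lower bound
    have hdistlb : ∀ (m m' : Fin s → F), m ≠ m' →
        n - z ≤ hammingDist (Matrix.vecMul m G) (Matrix.vecMul m' G) := by
      intro m m' hne
      have hd0 : m - m' ≠ 0 := sub_ne_zero.mpr hne
      have hcard := hzerocard (m - m') hd0
      have hiff : ∀ l : Fin n, (Matrix.vecMul (m - m') G l = 0) ↔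
          ¬ (Matrix.vecMul m G l ≠ Matrix.vecMul m' G l) := by
        intro l
        rw [Matrix.sub_vecMul, Pi.sub_apply, sub_eq_zero, not_not]
      have hsplit : hammingDist (Matrix.vecMul m G) (Matrix.vecMul m' G)
          + (Finset.univ.filter fun l => Matrix.vecMul (m - m') G l = 0).card = n := by
        rw [hammingDist, Finset.filter_congr (fun l _ => hiff l)]
        simpa using Finset.card_filter_add_card_filter_not
          (s := Finset.univ) (p := fun l => Matrix.vecMul m G l ≠ Matrix.vecMul m' G l)
      omega
    -- the minimum is attained at a row of maximal zero count
    obtain ⟨i0, -, hi0⟩ := Finset.exists_mem_eq_sup (Finset.univ : Finset (Fin s))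
      ⟨⟨0, hs⟩, Finset.mem_univ _⟩ (fun i => (B i).card)
    have hzi0 : z = (B i0).card := by rw [hzdef]; exact hi0
    have hzn : z ≤ n := by
      rw [hzi0]
      simpa using (B i0).card_le_univ
    set e0 : Fin s → F := fun i => if i = i0 then 1 else 0 with he0
    have hrowzero : ∀ l, Matrix.vecMul e0 G l = 0 ↔ l ∈ B i0 := by
      intro l
      rw [he0, vecMul_single_row, hGapp]
      constructor
      · intro h
        rcases mul_eq_zero.mp h with h | h
        · exact absurd (inv_eq_zero.mp h) (hd i0)
        · exact (hpeval i0 l).mp h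
      · intro h
        rw [(hpeval i0 l).mpr h, mul_zero]
    have hrowne : Matrix.vecMul e0 G ≠ (0 : Fin n → F) := by
      intro h
      have := congrFun h (jm i0)
      rw [hcw] at this
      simp [he0] at this
    have hrowdist : hammingDist (Matrix.vecMul e0 G) (0 : Fin n → F) = n - z := by
      have hfe : (Finset.univ.filter fun l => ¬ (Matrix.vecMul e0 G l ≠ (0 : Fin n → F) l))
          = B i0 := by
        ext l
        simp only [Finset.mem_filter, Finset.mem_univ, true_and, not_not, Pi.zero_apply]
        exact hrowzero l
      have hsplit := Finset.card_filter_add_card_filter_not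
        (s := (Finset.univ : Finset (Fin n)))
        (p := fun l => Matrix.vecMul e0 G l ≠ (0 : Fin n → F) l)
      rw [hfe] at hsplit
      rw [hammingDist]
      simp only [Finset.card_univ, Fintype.card_fin] at hsplit
      omega
    have hleast : IsLeast {d | ∃ x ∈ {c : Fin n → F | ∃ m : Fin s → F, c = Matrix.vecMul m G},
        ∃ y ∈ {c : Fin n → F | ∃ m : Fin s → F, c = Matrix.vecMul m G},
        x ≠ y ∧ hammingDist x y = d} (n - z) := by
      constructor
      · exact ⟨Matrix.vecMul e0 G, ⟨e0, rfl⟩, 0, ⟨0, (Matrix.zero_vecMul G).symm⟩,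
          hrowne, hrowdist⟩
      · rintro d ⟨x, ⟨m, rfl⟩, y, ⟨m', rfl⟩, hne, rfl⟩
        exact hdistlb m m' (fun h => hne (by rw [h]))
    have hmd : minDist {c : Fin n → F | ∃ m : Fin s → F, c = Matrix.vecMul m G} = n - z :=
      hleast.csInf_eq
    refine ⟨G, hGvalid, ⟨jm, hjI, hGsys⟩, hinj, ?_⟩
    rw [hmd, hkz]
    omega
  · -- optimality
    rintro G' hvalid ⟨jm', hjInj', hjsys'⟩ -
    have hE' : ∀ i, E i (jm' i) := by
      intro i
      by_contra h
      have h0 := hvalid i (jm' i) h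
      have h1 := hjsys' i i
      rw [h0] at h1
      simp at h1
    have hk' : ksys ≤ kMatch E jm' := hlb ⟨jm', ⟨hjInj', hE'⟩, rfl⟩
    set B' : Fin s → Finset (Fin n) :=
      fun i => Finset.univ.filter fun l : Fin n => ¬ MatchedAdj E jm' i l with hB'def
    set z' : ℕ := Finset.univ.sup fun i => (B' i).card with hz'def
    have hk'2 : ksys ≤ z' + 1 := hk'
    obtain ⟨i0, -, hi0⟩ := Finset.exists_mem_eq_sup (Finset.univ : Finset (Fin s))
      ⟨⟨0, hs⟩, Finset.mem_univ _⟩ (fun i => (B' i).card)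
    have hzi0 : z' = (B' i0).card := by rw [hz'def]; exact hi0
    -- row i0 vanishes on B' i0
    have hrowzero : ∀ l ∈ B' i0, G' i0 l = 0 := by
      intro l hl
      rw [hB'def] at hl
      simp only [Finset.mem_filter, Finset.mem_univ, true_and] at hl
      rw [MatchedAdj, not_or, not_and_or, not_not] at hl
      obtain ⟨hne, himg | hnE⟩ := hl
      · obtain ⟨i, -, rfl⟩ := Finset.mem_image.mp himg
        have h1 := hjsys' i i0
        have : i0 ≠ i := fun h => hne (by rw [h])
        rwa [if_neg this] at h1
      · exact hvalid i0 l hnE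
    set e0 : Fin s → F := fun i => if i = i0 then 1 else 0 with he0
    have hrow : ∀ l, Matrix.vecMul e0 G' l = G' i0 l := fun l => vecMul_single_row G' i0 l
    have hrowne : Matrix.vecMul e0 G' ≠ (0 : Fin n → F) := by
      intro h
      have h1 := congrFun h (jm' i0)
      rw [hrow, hjsys' i0 i0] at h1
      simp at h1
    have hwt : hammingDist (Matrix.vecMul e0 G') (0 : Fin n → F) ≤ n - z' := by
      have hsub : B' i0 ⊆ Finset.univ.filter
          fun l => ¬ (Matrix.vecMul e0 G' l ≠ (0 : Fin n → F) l) := by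
        intro l hl
        simp only [Finset.mem_filter, Finset.mem_univ, true_and, not_not, Pi.zero_apply]
        rw [hrow]
        exact hrowzero l hl
      have hcard : z' ≤ (Finset.univ.filter
          fun l => ¬ (Matrix.vecMul e0 G' l ≠ (0 : Fin n → F) l)).card := by
        rw [hzi0]
        exact Finset.card_le_card hsub
      have hsplit := Finset.card_filter_add_card_filter_not
        (s := (Finset.univ : Finset (Fin n)))
        (p := fun l => Matrix.vecMul e0 G' l ≠ (0 : Fin n → F) l)
      simp only [Finset.card_univ, Fintype.card_fin] at hsplit
      rw [hammingDist]
      omega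
    have hle : minDist {c : Fin n → F | ∃ m : Fin s → F, c = Matrix.vecMul m G'}
        ≤ hammingDist (Matrix.vecMul e0 G') (0 : Fin n → F) :=
      Nat.sInf_le ⟨Matrix.vecMul e0 G', ⟨e0, rfl⟩, 0, ⟨0, (Matrix.zero_vecMul G').symm⟩,
        hrowne, rfl⟩
    have hz'n : z' ≤ n := by
      rw [hzi0]
      simpa using (B' i0).card_le_univ
    have : minDist {c : Fin n → F | ∃ m : Fin s → F, c = Matrix.vecMul m G'} ≤ n - z' :=
      le_trans hle hwt
    omega
end

section
/- Let G = (M, V, E) be a constraint graph and let d* ≥ 1 be an integer with d* ≤ |N(m_i)| for every message vertex m_i. Let C' be any [n, n − d* + 1] linear MDS code over F_q. Then there exists a matrix G' ∈ F_q^{s×n} that is a valid generator matrix for G and whose rows are all nonzero codewords of C'; in particular, every row of G' has Hamming weight at least d*. -/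
/-- For each message vertex there is a nonzero codeword supported on its
neighborhood. -/
lemma exists_row_aux {n : ℕ} {F : Type*} [Field F] [Fintype F] [DecidableEq F]
    (T : Finset (Fin n)) (dstar : ℕ) (hT : dstar ≤ T.card)
    (C' : Submodule F (Fin n → F))
    (hdim : Module.finrank F C' = n - dstar + 1) :
    ∃ c : Fin n → F, c ∈ C' ∧ c ≠ 0 ∧ ∀ j, j ∉ T → c j = 0 := by
  classical
  set Tc : Finset (Fin n) := Tᶜ with hTc
  let f : C' →ₗ[F] (↥Tc → F) :=
    LinearMap.pi fun j => (LinearMap.proj (j : Fin n)).comp C'.subtype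
  have hrange : Module.finrank F (LinearMap.range f) ≤ n - dstar := by
    have h1 : Module.finrank F (LinearMap.range f) ≤ Module.finrank F (↥Tc → F) :=
      Submodule.finrank_le _
    have h2 : Module.finrank F (↥Tc → F) = Tc.card := by
      simp [Module.finrank_fintype_fun_eq_card]
    have h3 : Tc.card = n - T.card := by
      simp [hTc, Finset.card_compl]
    have h4 : n - T.card ≤ n - dstar := Nat.sub_le_sub_left hT n
    omega
  have hker : 0 < Module.finrank F (LinearMap.ker f) := by
    have := LinearMap.finrank_range_add_finrank_ker f
    rw [hdim] at this
    have hd' : dstar ≤ n := le_trans hT (by simpa using T.card_le_univ)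
    omega
  have hne : LinearMap.ker f ≠ ⊥ := by
    intro h
    rw [h, finrank_bot] at hker
    exact lt_irrefl 0 hker
  obtain ⟨⟨c, hcC⟩, hcker, hc0⟩ := Submodule.exists_mem_ne_zero_of_ne_bot hne
  refine ⟨c, hcC, ?_, ?_⟩
  · intro h
    exact hc0 (Subtype.ext h)
  · intro j hj
    have := LinearMap.mem_ker.mp hcker
    have := congrFun this ⟨j, by simpa [hTc] using hj⟩
    simpa [f] using this

/-- Let `G = (M, V, E)` be a constraint graph and `d* ≥ 1` an
integer with `d* ≤ |N(m_i)|` for every message vertex `m_i`.  Let `C'` be any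
`[n, n − d* + 1]` linear MDS code over `F_q` (MDS: the minimum Hamming weight of
a nonzero codeword equals `n − k + 1` with `k = n − d* + 1`, expressed as an
`IsLeast`).  Then there exists a matrix `G' ∈ F_q^{s×n}` that is a valid
generator matrix for `G` and whose rows are all nonzero codewords of `C'`; in
particular, every row of `G'` has Hamming weight at least `d*`. -/
theorem exists_valid_generator_rows_in_mds_code
    {s n : ℕ} {F : Type*} [Field F] [Fintype F] [DecidableEq F]
    (hsn : s ≤ n)
    (E : Fin s → Fin n → Prop) [∀ i j, Decidable (E i j)]
    (dstar : ℕ) (hd : 1 ≤ dstar)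
    (hdeg : ∀ i : Fin s, dstar ≤ (Finset.univ.filter fun j : Fin n => E i j).card)
    (C' : Submodule F (Fin n → F))
    (hdim : Module.finrank F C' = n - dstar + 1)
    (hMDS : IsLeast {w : ℕ | ∃ c ∈ C', c ≠ 0 ∧ hammingNorm c = w}
      (n - (n - dstar + 1) + 1)) :
    ∃ G' : Matrix (Fin s) (Fin n) F,
      (∀ i j, ¬ E i j → G' i j = 0) ∧
      (∀ i : Fin s, G' i ∈ C' ∧ G' i ≠ 0 ∧ dstar ≤ hammingNorm (G' i)) := by
  classical
  choose c hcC hc0 hcsupp using fun i : Fin s =>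
    exists_row_aux (Finset.univ.filter fun j : Fin n => E i j) dstar (hdeg i) C' hdim
  refine ⟨Matrix.of c, ?_, ?_⟩
  · intro i j hij
    exact hcsupp i j (by simp [hij])
  · intro i
    refine ⟨hcC i, hc0 i, ?_⟩
    have hdn : dstar ≤ n := le_trans (hdeg i)
      (by simpa using (Finset.univ.filter fun j : Fin n => E i j).card_le_univ)
    have := hMDS.2 ⟨c i, hcC i, hc0 i, rfl⟩
    show dstar ≤ hammingNorm (c i)
    omega
end

section
/- Let G = (M, V, E) be a constraint graph admitting an M-covering matching, suppose q ≥ n, and let k be any integer with k_sys ≤ k ≤ n. Then the [n, k] Reed–Solomon code over F_q with any defining set of n distinct elements of F_q contains a subcode generated by a valid generator matrix for G in systematic form; this subcode has dimension s and minimum distance at least n − k + 1. -/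
/-- The `[n, k]` Reed–Solomon code over `F` with defining set `α 1, …, α n`:
evaluations of polynomials of degree `< k` at the points `α j`. -/
def RSCode {n : ℕ} (F : Type*) [Field F] (k : ℕ) (α : Fin n → F) :
    Set (Fin n → F) :=
  {c | ∃ p : Polynomial F, p.degree < (k : WithBot ℕ) ∧ c = fun j => p.eval (α j)}

/-! Fix a matching `jm` attaining `k_sys`. Row `i` of the generator matrix is the Lagrange
basis polynomial that is `1` at `α (jm i)` and vanishes at the zeros of row `i` of `A_Ẽ`;
these include every non-neighbour of `m_i` and every other matched position, so the matrix is
valid and systematic, and there are fewer than `k_sys ≤ k` of them, so every row is a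
Reed–Solomon codeword. The subcode then inherits the Reed–Solomon distance `n - k + 1`: a
nonzero polynomial of degree `< k` has fewer than `k` roots among the distinct `α j`. -/

open Polynomial Finset

section ReedSolomon

variable {F : Type*} [Field F] {n : ℕ} {k : ℕ} {α : Fin n → F}

variable (F k α) in
theorem RSCode_eq_map :
    RSCode F k α = ((degreeLT F k).map (LinearMap.pi fun j => leval (α j)) : Set (Fin n → F)) := by
  ext c
  rw [SetLike.mem_coe, Submodule.mem_map]
  exact ⟨fun ⟨p, hp, hc⟩ => ⟨p, mem_degreeLT.mpr hp, hc.symm⟩,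
    fun ⟨p, hp, hc⟩ => ⟨p, mem_degreeLT.mp hp, hc.symm⟩⟩

theorem sub_mem_RSCode {x y : Fin n → F} (hx : x ∈ RSCode F k α) (hy : y ∈ RSCode F k α) :
    x - y ∈ RSCode F k α := by
  rw [RSCode_eq_map] at *
  exact Submodule.sub_mem _ hx hy

theorem vecMul_mem_RSCode {s : ℕ} {G : Matrix (Fin s) (Fin n) F}
    (hG : ∀ i, G i ∈ RSCode F k α) (m : Fin s → F) : Matrix.vecMul m G ∈ RSCode F k α := by
  rw [RSCode_eq_map] at *
  rw [Matrix.vecMul_eq_sum]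
  exact Submodule.sum_mem _ fun i _ => Submodule.smul_mem _ _ (hG i)

theorem card_zeros_lt_of_mem_RSCode [DecidableEq F] (hα : Function.Injective α)
    {c : Fin n → F} (hc : c ∈ RSCode F k α) (hc0 : c ≠ 0) :
    #{j | c j = 0} < k := by
  obtain ⟨p, hp, rfl⟩ := hc
  have hp0 : p ≠ 0 := by
    rintro rfl
    exact hc0 (funext fun j => eval_zero)
  calc #{j | p.eval (α j) = 0} = #(({j | p.eval (α j) = 0} : Finset (Fin n)).image α) :=
        (card_image_of_injective _ hα).symm
    _ ≤ p.natDegree := card_le_degree_of_subset_roots fun x hx => by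
        obtain ⟨j, hj, rfl⟩ := mem_image.mp (mem_val.mp hx)
        exact (mem_roots hp0).mpr (mem_filter.mp hj).2
    _ < k := (natDegree_lt_iff_degree_lt hp0).mpr hp

theorem le_hammingNorm_of_mem_RSCode [DecidableEq F] (hα : Function.Injective α)
    {c : Fin n → F} (hc : c ∈ RSCode F k α) (hc0 : c ≠ 0) :
    n - k + 1 ≤ hammingNorm c := by
  have hzeros := card_zeros_lt_of_mem_RSCode hα hc hc0
  have hpos := hammingNorm_pos_iff.mpr hc0
  have hsplit : #{j | c j = 0} + hammingNorm c = n := by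
    rw [hammingNorm, card_filter_add_card_filter_not, card_univ, Fintype.card_fin]
  omega

theorem le_hammingDist_of_mem_RSCode [DecidableEq F] (hα : Function.Injective α)
    {x y : Fin n → F} (hx : x ∈ RSCode F k α) (hy : y ∈ RSCode F k α) (hxy : x ≠ y) :
    n - k + 1 ≤ hammingDist x y := by
  rw [hammingDist_comm, hammingDist_eq_hammingNorm, neg_add_eq_sub]
  exact le_hammingNorm_of_mem_RSCode hα (sub_mem_RSCode hx hy) (sub_ne_zero.mpr hxy)

end ReedSolomon

section Systematic

variable {R ι κ : Type*} [CommSemiring R] [Fintype ι] [DecidableEq ι]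

theorem vecMul_apply_of_systematic {G : Matrix ι κ R} {jm : ι → κ}
    (hG : ∀ i i', G i' (jm i) = if i' = i then 1 else 0) (m : ι → R) (i : ι) :
    Matrix.vecMul m G (jm i) = m i := by
  simp [Matrix.vecMul, dotProduct, hG]

theorem vecMul_injective_of_systematic {G : Matrix ι κ R} {jm : ι → κ}
    (hG : ∀ i i', G i' (jm i) = if i' = i then 1 else 0) :
    Function.Injective fun m : ι → R => Matrix.vecMul m G := fun m m' h => funext fun i => by
  simpa only [vecMul_apply_of_systematic hG] using congrFun h (jm i)

end Systematic

section MatchedAdjacency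

variable {s n : ℕ} {E : Fin s → Fin n → Prop} {jm : Fin s → Fin n}

theorem matchedAdj_self (i : Fin s) : MatchedAdj E jm i (jm i) :=
  Or.inl rfl

theorem not_matchedAdj_of_ne (hjm : Function.Injective jm) {i i' : Fin s} (h : i' ≠ i) :
    ¬ MatchedAdj E jm i' (jm i) := by
  rintro (h' | ⟨hunmatched, -⟩)
  · exact h (hjm h').symm
  · exact hunmatched (mem_image_of_mem jm (mem_univ i))

theorem IsMatching.edge_of_matchedAdj (hjm : IsMatching E jm) {i : Fin s} {l : Fin n}
    (h : MatchedAdj E jm i l) : E i l := by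
  rcases h with rfl | ⟨-, h⟩
  exacts [hjm.2 i, h]

variable [∀ i j, Decidable (E i j)]

variable (E jm) in
def rowZeros (i : Fin s) : Finset (Fin n) :=
  {l | ¬ MatchedAdj E jm i l}

theorem apply_notMem_rowZeros (i : Fin s) : jm i ∉ rowZeros E jm i := by
  simp [rowZeros, matchedAdj_self]

theorem card_rowZeros_lt_kMatch (i : Fin s) : #(rowZeros E jm i) < kMatch E jm :=
  Nat.lt_succ_of_le (le_sup (f := fun i => #(rowZeros E jm i)) (mem_univ i))

end MatchedAdjacency

section MatchedLagrangeMatrix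

variable {F : Type*} [Field F] {s n : ℕ} {E : Fin s → Fin n → Prop} [∀ i j, Decidable (E i j)]
  {jm : Fin s → Fin n} {α : Fin n → F}

variable (E jm α) in
noncomputable def matchedLagrangeMatrix : Matrix (Fin s) (Fin n) F :=
  Matrix.of fun i l => (Lagrange.basis (insert (jm i) (rowZeros E jm i)) α (jm i)).eval (α l)

theorem matchedLagrangeMatrix_eq_zero {i : Fin s} {l : Fin n} (hl : l ∈ rowZeros E jm i) :
    matchedLagrangeMatrix E jm α i l = 0 :=
  Lagrange.eval_basis_of_ne (fun h => apply_notMem_rowZeros i (h ▸ hl)) (mem_insert_of_mem hl)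

theorem matchedLagrangeMatrix_apply_self (hα : Function.Injective α) (i : Fin s) :
    matchedLagrangeMatrix E jm α i (jm i) = 1 :=
  Lagrange.eval_basis_self hα.injOn (mem_insert_self _ _)

theorem matchedLagrangeMatrix_eq_zero_of_not_edge (hjm : IsMatching E jm) {i : Fin s}
    {l : Fin n} (hE : ¬ E i l) : matchedLagrangeMatrix E jm α i l = 0 :=
  matchedLagrangeMatrix_eq_zero (by simpa [rowZeros] using mt hjm.edge_of_matchedAdj hE)

theorem matchedLagrangeMatrix_systematic (hα : Function.Injective α) (hjm : Function.Injective jm)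
    (i i' : Fin s) : matchedLagrangeMatrix E jm α i' (jm i) = if i' = i then 1 else 0 := by
  split_ifs with h
  · exact h ▸ matchedLagrangeMatrix_apply_self hα i'
  · exact matchedLagrangeMatrix_eq_zero (by simpa [rowZeros] using not_matchedAdj_of_ne hjm h)

theorem matchedLagrangeMatrix_row_mem_RSCode (hα : Function.Injective α) {k : ℕ}
    (hk : kMatch E jm ≤ k) (i : Fin s) : matchedLagrangeMatrix E jm α i ∈ RSCode F k α := by
  refine ⟨_, ?_, rfl⟩
  rw [Lagrange.degree_basis hα.injOn (mem_insert_self _ _),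
    card_insert_of_notMem (apply_notMem_rowZeros i), Nat.add_sub_cancel]
  exact_mod_cast (card_rowZeros_lt_kMatch i).trans_le hk

end MatchedLagrangeMatrix

theorem RS_contains_systematic_valid_subcode_general
    {s n : ℕ} {F : Type*} [Field F] [DecidableEq F]
    (E : Fin s → Fin n → Prop) [∀ i j, Decidable (E i j)]
    (α : Fin n → F) (hα : Function.Injective α)
    (ksys : ℕ)
    (hksys : IsLeast {k' : ℕ | ∃ jm : Fin s → Fin n,
      IsMatching E jm ∧ k' = kMatch E jm} ksys)
    (k : ℕ) (hk1 : ksys ≤ k) :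
    ∃ G' : Matrix (Fin s) (Fin n) F,
      (∀ i j, ¬ E i j → G' i j = 0) ∧
      (∃ jm : Fin s → Fin n, Function.Injective jm ∧
        ∀ i i' : Fin s, G' i' (jm i) = if i' = i then 1 else 0) ∧
      (∀ i : Fin s, G' i ∈ RSCode F k α) ∧
      Function.Injective (fun m : Fin s → F => Matrix.vecMul m G') ∧
      (∀ x y : Fin n → F,
        (∃ m : Fin s → F, x = Matrix.vecMul m G') →
        (∃ m : Fin s → F, y = Matrix.vecMul m G') →
        x ≠ y → n - k + 1 ≤ hammingDist x y) := by
  obtain ⟨jm, hjm, rfl⟩ := hksys.1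
  have hsys := matchedLagrangeMatrix_systematic (E := E) hα hjm.1
  have hrows := matchedLagrangeMatrix_row_mem_RSCode (E := E) hα hk1
  refine ⟨matchedLagrangeMatrix E jm α, fun i l => matchedLagrangeMatrix_eq_zero_of_not_edge hjm,
    ⟨jm, hjm.1, hsys⟩, hrows, vecMul_injective_of_systematic hsys, ?_⟩
  rintro x y ⟨m, rfl⟩ ⟨m', rfl⟩ hxy
  exact le_hammingDist_of_mem_RSCode hα (vecMul_mem_RSCode hrows m) (vecMul_mem_RSCode hrows m') hxy

/-- Let `G = (M, V, E)` be a constraint graph admitting an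
`M`-covering matching, `q ≥ n`, and let `k_sys ≤ k ≤ n`.  Then the `[n, k]`
Reed–Solomon code with any defining set of `n` distinct elements of `F_q`
contains a subcode generated by a valid generator matrix for `G` in systematic
form; this subcode has dimension `s` (the encoding map is injective) and minimum
distance at least `n − k + 1`. -/
theorem RS_contains_systematic_valid_subcode
    {s n : ℕ} {F : Type*} [Field F] [Fintype F] [DecidableEq F]
    (hsn : s ≤ n) (hq : n ≤ Fintype.card F)
    (E : Fin s → Fin n → Prop) [∀ i j, Decidable (E i j)]
    (α : Fin n → F) (hα : Function.Injective α)
    (jm0 : Fin s → Fin n) (hjm0 : IsMatching E jm0)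
    (ksys : ℕ)
    (hksys : IsLeast {k' : ℕ | ∃ jm : Fin s → Fin n,
      IsMatching E jm ∧ k' = kMatch E jm} ksys)
    (k : ℕ) (hk1 : ksys ≤ k) (hk2 : k ≤ n) :
    ∃ G' : Matrix (Fin s) (Fin n) F,
      (∀ i j, ¬ E i j → G' i j = 0) ∧
      (∃ jm : Fin s → Fin n, Function.Injective jm ∧
        ∀ i i' : Fin s, G' i' (jm i) = if i' = i then 1 else 0) ∧
      (∀ i : Fin s, G' i ∈ RSCode F k α) ∧
      Function.Injective (fun m : Fin s → F => Matrix.vecMul m G') ∧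
      (∀ x y : Fin n → F,
        (∃ m : Fin s → F, x = Matrix.vecMul m G') →
        (∃ m : Fin s → F, y = Matrix.vecMul m G') →
        x ≠ y → n - k + 1 ≤ hammingDist x y) :=
  RS_contains_systematic_valid_subcode_general E α hα ksys hksys k hk1
end
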